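/- Every palindromic factor of the paperfolding word u_pf has length at most 13, and u_pf has a palindromic factor of length exactly 13. -/
import Mathlib


/-- Prefix `u[0..n-1]` of the infinite word `u`. -/
def wordPrefix {A : Type*} (u : ℕ → A) (n : ℕ) : List A :=
  List.ofFn (fun i : Fin n => u i)

/-- Factor `u[i..i+ℓ-1]` of the infinite word `u`. -/
def wordFactor {A : Type*} (u : ℕ → A) (i ℓ : ℕ) : List A :=
  List.ofFn (fun j : Fin ℓ => u (i + j))

/-- A palindrome is a word equal to its reversal. -/
def IsPalindrome {A : Type*} (w : List A) : Prop := w.reverse = w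

/-- `w` is a concatenation of `k` nonempty palindromes. -/
def IsPalConcat {A : Type*} (w : List A) (k : ℕ) : Prop :=
  ∃ ps : List (List A), ps.length = k ∧ (∀ p ∈ ps, p ≠ [] ∧ IsPalindrome p) ∧ ps.flatten = w

/-- Prefix palindromic length: the least number of nonempty palindromes whose
concatenation is the prefix of length `n` of `u` (`PPL u 0 = 0`). -/
noncomputable def PPL {A : Type*} (u : ℕ → A) (n : ℕ) : ℕ :=
  sInf {k | IsPalConcat (wordPrefix u n) k}

/-- The PPL-difference sequence `d_u(n) = PPL_u(n+1) - PPL_u(n)`. -/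
noncomputable def PPLdiff {A : Type*} (u : ℕ → A) (n : ℕ) : ℤ :=
  (PPL u (n + 1) : ℤ) - (PPL u n : ℤ)

/-- The fixed point starting with `a` of the 2-uniform morphism sending each letter
`x` to the two-letter word `mu x` (assuming `(mu a).1 = a`):
the unique infinite word `w` with `w 0 = a`, `w (2n) = (mu (w n)).1`,
`w (2n+1) = (mu (w n)).2`. -/
def fixedPoint2 {A : Type*} (mu : A → A × A) (a : A) : ℕ → A
  | 0 => a
  | n + 1 =>
    if (n + 1) % 2 = 0 then (mu (fixedPoint2 mu a ((n + 1) / 2))).1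
    else (mu (fixedPoint2 mu a ((n + 1) / 2))).2
termination_by n => n
decreasing_by all_goals exact Nat.div_lt_self (Nat.succ_pos n) one_lt_two

/-- The morphism `φ_pf` on `{a, b, c, d}` (encoded as `0, 1, 2, 3`):
`a ↦ ab`, `b ↦ cb`, `c ↦ ad`, `d ↦ cd`. -/
def phiPF : Fin 4 → Fin 4 × Fin 4
  | 0 => (0, 1)
  | 1 => (2, 1)
  | 2 => (0, 3)
  | 3 => (2, 3)

/-- The fixed point `v = φ_pf^ω(a)`. -/
def vPF : ℕ → Fin 4 := fixedPoint2 phiPF 0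

/-- The coding `ψ : a, b ↦ 0`, `c, d ↦ 1`. -/
def codingPF (x : Fin 4) : Fin 2 := if (x : ℕ) < 2 then 0 else 1

/-- The paperfolding word `u_pf = ψ(φ_pf^ω(a)) = 0010011000110110⋯`. -/
def paperfolding (n : ℕ) : Fin 2 := codingPF (vPF n)

lemma fp2_succ {A : Type*} (mu : A → A × A) (a : A) (n : ℕ) :
    fixedPoint2 mu a (n+1) =
      if (n + 1) % 2 = 0 then (mu (fixedPoint2 mu a ((n + 1) / 2))).1
      else (mu (fixedPoint2 mu a ((n + 1) / 2))).2 := by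
  rw [fixedPoint2]

lemma vPF_zero : vPF 0 = 0 := by rw [vPF, fixedPoint2]

lemma vPF_even (m : ℕ) : vPF (2*m) = (phiPF (vPF m)).1 := by
  rcases Nat.eq_zero_or_pos m with rfl | hm
  · rw [vPF_zero]; rfl
  · obtain ⟨k, hk⟩ : ∃ k, 2*m = k+1 := ⟨2*m-1, by omega⟩
    rw [vPF, hk, fp2_succ]
    have h1 : (k+1) % 2 = 0 := by omega
    have h2 : (k+1) / 2 = m := by omega
    rw [if_pos h1, h2]

lemma vPF_odd (m : ℕ) : vPF (2*m+1) = (phiPF (vPF m)).2 := by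
  rw [vPF, fp2_succ]
  have h1 : (2*m+1) % 2 ≠ 0 := by omega
  have h2 : (2*m+1) / 2 = m := by omega
  rw [if_neg h1, h2]

lemma vPF_parity (n : ℕ) : (vPF n : ℕ) % 2 = n % 2 := by
  rcases Nat.even_or_odd' n with ⟨m, rfl | rfl⟩
  · rw [vPF_even]
    have : ∀ x : Fin 4, ((phiPF x).1 : ℕ) % 2 = 0 := by decide
    rw [this]; omega
  · rw [vPF_odd]
    have : ∀ x : Fin 4, ((phiPF x).2 : ℕ) % 2 = 1 := by decide
    rw [this]; omega

lemma pf_even (m : ℕ) : paperfolding (2*m) = if m % 2 = 0 then 0 else 1 := by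
  have hp := vPF_parity m
  have hlt := (vPF m).isLt
  rw [paperfolding, vPF_even]
  have hkey : ∀ x : Fin 4, codingPF ((phiPF x).1) = if (x : ℕ) % 2 = 0 then 0 else 1 := by decide
  rw [hkey, hp]

lemma pf_odd (m : ℕ) : paperfolding (2*m+1) = paperfolding m := by
  rw [paperfolding, paperfolding, vPF_odd]
  have hkey : ∀ x : Fin 4, codingPF ((phiPF x).2) = codingPF x := by decide
  rw [hkey]

lemma pf_zero : paperfolding 0 = 0 := by
  rw [paperfolding, vPF_zero]; rfl

-- no run of length 4 with u(m) = m % 2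
lemma run0 (a : ℕ) (h : ∀ t < 4, paperfolding (a+t) = if (a+t) % 2 = 0 then 0 else 1) :
    False := by
  set t := (6 - a % 4) % 4 with ht
  have h4 : (a + t) % 4 = 2 := by omega
  obtain ⟨m, hm, hm1⟩ : ∃ m, a + t = 2*m ∧ m % 2 = 1 := ⟨(a+t)/2, by omega, by omega⟩
  have h1 := h t (by omega)
  rw [hm, pf_even, if_neg (by omega), if_pos (by omega)] at h1
  exact absurd h1 (by decide)

-- no run of length 4 with u(m) = (m+1) % 2
lemma run1 (a : ℕ) (h : ∀ t < 4, paperfolding (a+t) = if (a+t) % 2 = 0 then 1 else 0) :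
    False := by
  set t := (4 - a % 4) % 4 with ht
  have h4 : (a + t) % 4 = 0 := by omega
  obtain ⟨m, hm, hm1⟩ : ∃ m, a + t = 2*m ∧ m % 2 = 0 := ⟨(a+t)/2, by omega, by omega⟩
  have h1 := h t (by omega)
  rw [hm, pf_even, if_pos (by omega), if_pos (by omega)] at h1
  exact absurd h1 (by decide)

lemma no8 (c : ℕ) (h : ∀ j < 8, paperfolding (c+j) = paperfolding (c+(7-j))) : False := by
  rcases Nat.even_or_odd' c with ⟨a, rfl | rfl⟩
  · apply run1 a
    intro t ht
    have h1 := h (2*t+1) (by omega)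
    have e1 : 2*a + (2*t+1) = 2*(a+t)+1 := by omega
    have e2 : 2*a + (7 - (2*t+1)) = 2*(a+(3-t)) := by omega
    rw [e1, e2, pf_odd, pf_even] at h1
    by_cases hp : (a+t) % 2 = 0
    · rw [if_pos hp]; rw [if_neg (show ¬(a+(3-t)) % 2 = 0 by omega)] at h1; exact h1
    · rw [if_neg hp]; rw [if_pos (show (a+(3-t)) % 2 = 0 by omega)] at h1; exact h1
  · apply run0 a
    intro t ht
    have h1 := h (2*t) (by omega)
    have e1 : 2*a+1 + 2*t = 2*(a+t)+1 := by omega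
    have e2 : 2*a+1 + (7 - 2*t) = 2*(a+(4-t)) := by omega
    rw [e1, e2, pf_odd, pf_even] at h1
    have : (a + (4 - t)) % 2 = (a + t) % 2 := by omega
    rw [this] at h1
    exact h1

lemma no14 (i : ℕ) (h : ∀ j < 14, paperfolding (i+j) = paperfolding (i+(13-j))) : False := by
  rcases Nat.even_or_odd' i with ⟨a, rfl | rfl⟩
  · apply run0 a
    intro t ht
    have h1 := h (2*t+1) (by omega)
    have e1 : 2*a + (2*t+1) = 2*(a+t)+1 := by omega
    have e2 : 2*a + (13 - (2*t+1)) = 2*(a+(6-t)) := by omega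
    rw [e1, e2, pf_odd, pf_even] at h1
    have : (a + (6 - t)) % 2 = (a + t) % 2 := by omega
    rw [this] at h1
    exact h1
  · apply run1 a
    intro t ht
    have h1 := h (2*t) (by omega)
    have e1 : 2*a+1 + 2*t = 2*(a+t)+1 := by omega
    have e2 : 2*a+1 + (13 - 2*t) = 2*(a+(7-t)) := by omega
    rw [e1, e2, pf_odd, pf_even] at h1
    by_cases hp : (a+t) % 2 = 0
    · rw [if_pos hp]; rw [if_neg (show ¬(a+(7-t)) % 2 = 0 by omega)] at h1; exact h1
    · rw [if_neg hp]; rw [if_pos (show (a+(7-t)) % 2 = 0 by omega)] at h1; exact h1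

lemma no15 (i : ℕ) (h : ∀ j < 15, paperfolding (i+j) = paperfolding (i+(14-j))) : False := by
  rcases Nat.even_or_odd' i with ⟨a, rfl | rfl⟩
  · have h1 := h 0 (by omega)
    have e1 : 2*a + 0 = 2*a := by omega
    have e2 : 2*a + (14 - 0) = 2*(a+7) := by omega
    rw [e1, e2, pf_even, pf_even] at h1
    by_cases hp : a % 2 = 0
    · rw [if_pos hp, if_neg (by omega)] at h1; exact absurd h1 (by decide)
    · rw [if_neg hp, if_pos (by omega)] at h1; exact absurd h1 (by decide)
  · apply no8 a
    intro j hj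
    have h1 := h (2*j) (by omega)
    have e1 : 2*a+1 + 2*j = 2*(a+j)+1 := by omega
    have e2 : 2*a+1 + (14 - 2*j) = 2*(a+(7-j))+1 := by omega
    rw [e1, e2, pf_odd, pf_odd] at h1
    exact h1

lemma pal_iff {A : Type*} (u : ℕ → A) (i ℓ : ℕ) :
    IsPalindrome (wordFactor u i ℓ) ↔ ∀ j, j < ℓ → u (i + j) = u (i + (ℓ - 1 - j)) := by
  unfold IsPalindrome wordFactor
  constructor
  · intro h j hj
    have h1 : (List.ofFn fun j : Fin ℓ => u (i + j)).reverse[j]'(by simpa using hj)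
        = (List.ofFn fun j : Fin ℓ => u (i + j))[j]'(by simpa using hj) :=
      List.getElem_of_eq h _
    rw [List.getElem_reverse, List.getElem_ofFn, List.getElem_ofFn] at h1
    simp only [List.length_ofFn] at h1
    exact h1.symm
  · intro h
    apply List.ext_getElem (by simp)
    intro j h1 h2
    rw [List.getElem_reverse, List.getElem_ofFn, List.getElem_ofFn]
    simp only [List.length_ofFn] at h2 ⊢
    exact (h j h2).symm

lemma descend {A : Type*} (u : ℕ → A) (i ℓ : ℕ)
    (h : IsPalindrome (wordFactor u i (ℓ+2))) : IsPalindrome (wordFactor u (i+1) ℓ) := by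
  rw [pal_iff] at h ⊢
  intro j hj
  have h1 := h (j+1) (by omega)
  have e1 : i + (j+1) = i + 1 + j := by omega
  have e2 : i + (ℓ + 2 - 1 - (j+1)) = i + 1 + (ℓ - 1 - j) := by omega
  rw [e1, e2] at h1
  exact h1

lemma no_long : ∀ ℓ, 14 ≤ ℓ → ∀ i, ¬ IsPalindrome (wordFactor paperfolding i ℓ) := by
  intro ℓ
  induction ℓ using Nat.strong_induction_on with
  | _ ℓ ih =>
    intro hℓ i hpal
    rcases Nat.lt_or_ge ℓ 16 with h16 | h16
    · interval_cases ℓ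
      · rw [pal_iff] at hpal
        exact no14 i (fun j hj => by
          have := hpal j hj
          have e : i + (14 - 1 - j) = i + (13 - j) := by omega
          rw [e] at this; exact this)
      · rw [pal_iff] at hpal
        exact no15 i (fun j hj => by
          have := hpal j hj
          have e : i + (15 - 1 - j) = i + (14 - j) := by omega
          rw [e] at this; exact this)
    · obtain ⟨p, rfl⟩ : ∃ p, ℓ = p + 2 := ⟨ℓ - 2, by omega⟩
      exact ih p (by omega) (by omega) (i+1) (descend _ _ _ hpal)

lemma pfv : paperfolding 6 = 1 ∧ paperfolding 7 = 0 ∧ paperfolding 8 = 0 ∧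
    paperfolding 9 = 0 ∧ paperfolding 10 = 1 ∧ paperfolding 11 = 1 ∧
    paperfolding 12 = 0 ∧ paperfolding 13 = 1 ∧ paperfolding 14 = 1 ∧
    paperfolding 15 = 0 ∧ paperfolding 16 = 0 ∧ paperfolding 17 = 0 ∧
    paperfolding 18 = 1 := by
  have e0 : paperfolding 0 = 0 := pf_zero
  have e1 : paperfolding 1 = 0 := by have h := pf_odd 0; norm_num [e0] at h; exact h
  have e2 : paperfolding 2 = 1 := by have h := pf_even 1; norm_num at h; exact h
  have e3 : paperfolding 3 = 0 := by have h := pf_odd 1; norm_num [e1] at h; exact h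
  have e4 : paperfolding 4 = 0 := by have h := pf_even 2; norm_num at h; exact h
  have e5 : paperfolding 5 = 1 := by have h := pf_odd 2; norm_num [e2] at h; exact h
  have e6 : paperfolding 6 = 1 := by have h := pf_even 3; norm_num at h; exact h
  have e7 : paperfolding 7 = 0 := by have h := pf_odd 3; norm_num [e3] at h; exact h
  have e8 : paperfolding 8 = 0 := by have h := pf_even 4; norm_num at h; exact h
  have e9 : paperfolding 9 = 0 := by have h := pf_odd 4; norm_num [e4] at h; exact h
  have e10 : paperfolding 10 = 1 := by have h := pf_even 5; norm_num at h; exact h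
  have e11 : paperfolding 11 = 1 := by have h := pf_odd 5; norm_num [e5] at h; exact h
  have e12 : paperfolding 12 = 0 := by have h := pf_even 6; norm_num at h; exact h
  have e13 : paperfolding 13 = 1 := by have h := pf_odd 6; norm_num [e6] at h; exact h
  have e14 : paperfolding 14 = 1 := by have h := pf_even 7; norm_num at h; exact h
  have e15 : paperfolding 15 = 0 := by have h := pf_odd 7; norm_num [e7] at h; exact h
  have e16 : paperfolding 16 = 0 := by have h := pf_even 8; norm_num at h; exact h
  have e17 : paperfolding 17 = 0 := by have h := pf_odd 8; norm_num [e8] at h; exact h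
  have e18 : paperfolding 18 = 1 := by have h := pf_even 9; norm_num at h; exact h
  exact ⟨e6, e7, e8, e9, e10, e11, e12, e13, e14, e15, e16, e17, e18⟩


/-- Every palindromic factor of the paperfolding word has length at most 13, and
there is a palindromic factor of length exactly 13. -/
theorem paperfolding_palindromes :
    (∀ i ℓ : ℕ, 1 ≤ ℓ → IsPalindrome (wordFactor paperfolding i ℓ) → ℓ ≤ 13) ∧
      (∃ i : ℕ, IsPalindrome (wordFactor paperfolding i 13)) := by
  constructor
  · intro i ℓ _ hpal
    by_contra hc
    exact no_long ℓ (by omega) i hpal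
  · refine ⟨6, ?_⟩
    obtain ⟨e6, e7, e8, e9, e10, e11, e12, e13, e14, e15, e16, e17, e18⟩ := pfv
    rw [pal_iff]
    intro j hj
    interval_cases j <;> norm_num [e6, e7, e8, e9, e10, e11, e12, e13, e14, e15, e16, e17, e18]
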